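/- arXiv:2405.04467 — 3 statements merged into one kernel-verified Lean document; each statement's English description precedes it below -/
import Mathlib

section
/- Let ε, γ ∈ (0,1] and let w_U, w_I, w̄_I, Δ̄, δ be positive real numbers satisfying: δ ≥ γ·Δ̄ (the proactive trigger fired), Δ̄ ≥ (ε/2)·w̄_I and Δ̄ < 2ε·w̄_I (the allocated slack is proportional to the allocated weight), and w̄_I ≥ w_I - Δ̄ (the weight increased by at most the update count, which is at most Δ̄). Then w_U/δ ≤ (2(1+2ε)/(γε)) · (w_U/w_I). -/
/-- Amortized write-cost of a proactive reallocation is bounded by a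
constant multiple of the parent–child weight ratio.
With `ε, γ ∈ (0,1]`, positive `w_U, w_I, w̄_I, Δ̄, δ`, `δ ≥ γ·Δ̄`,
`(ε/2)·w̄_I ≤ Δ̄ < 2ε·w̄_I`, and `w̄_I ≥ w_I - Δ̄`, we get
`w_U/δ ≤ (2(1+2ε)/(γε)) · (w_U/w_I)`. -/
theorem stmt4 (ε γ wU wI wbarI Δbar δ : ℝ)
    (hε0 : 0 < ε) (hε1 : ε ≤ 1) (hγ0 : 0 < γ) (hγ1 : γ ≤ 1)
    (hwU : 0 < wU) (hwI : 0 < wI) (hwbarI : 0 < wbarI)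
    (hΔbar : 0 < Δbar) (hδpos : 0 < δ)
    (htrigger : γ * Δbar ≤ δ)
    (hslack_lo : ε / 2 * wbarI ≤ Δbar) (hslack_hi : Δbar < 2 * ε * wbarI)
    (hweight : wI - Δbar ≤ wbarI) :
    wU / δ ≤ 2 * (1 + 2 * ε) / (γ * ε) * (wU / wI) := by
  have hC : 0 < γ * ε := mul_pos hγ0 hε0
  have h1 : wI ≤ (1 + 2 * ε) * wbarI := by nlinarith
  have h2 : γ * ε / 2 * wbarI ≤ δ := by nlinarith
  have key : γ * ε * wI ≤ 2 * (1 + 2 * ε) * δ := by nlinarith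
  rw [mul_div_assoc', div_le_div_iff₀ hδpos hwI, div_mul_eq_mul_div, div_mul_eq_mul_div, le_div_iff₀ hC]
  nlinarith [mul_le_mul_of_nonneg_left key hwU.le]
end

section
/- Let ε̄ ∈ (0,1] and γ ∈ (0,1] be real numbers, let w̄ > 0 be a real number, and let δ, w, Δ be real numbers with 0 ≤ δ < γ·ε̄·w̄, 0 < w ≤ w̄ + δ, and Δ ≥ ε̄·w̄ - δ. Then Δ/w > ε̄·(1-γ)/(1+γ·ε̄) ≥ ε̄·(1-2γ). That is, an interval allocated with relative slack ε̄ retains relative slack strictly greater than ε̄(1-2γ) as long as fewer than γ·ε̄·w̄ units of update weight have occurred in it. -/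
/-- Drift bound for the relative slack under the proactive trigger.
Let `ε̄, γ ∈ (0,1]`, `w̄ > 0`, and `δ, w, Δ` with `0 ≤ δ < γ·ε̄·w̄`,
`0 < w ≤ w̄ + δ`, and `Δ ≥ ε̄·w̄ - δ`. Then
`Δ/w > ε̄·(1-γ)/(1+γ·ε̄) ≥ ε̄·(1-2γ)`. -/
theorem stmt5 (εbar γ wbar δ w Δ : ℝ)
    (hε0 : 0 < εbar) (hε1 : εbar ≤ 1) (hγ0 : 0 < γ) (hγ1 : γ ≤ 1)
    (hwbar : 0 < wbar)
    (hδ0 : 0 ≤ δ) (hδ : δ < γ * εbar * wbar)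
    (hw0 : 0 < w) (hw : w ≤ wbar + δ)
    (hΔ : εbar * wbar - δ ≤ Δ) :
    εbar * (1 - γ) / (1 + γ * εbar) < Δ / w ∧
      εbar * (1 - 2 * γ) ≤ εbar * (1 - γ) / (1 + γ * εbar) := by
  have hden : (0:ℝ) < 1 + γ * εbar := by positivity
  have hnn : 0 ≤ εbar * (1 - γ) := mul_nonneg hε0.le (by linarith)
  constructor
  · rw [div_lt_div_iff₀ hden hw0]
    nlinarith [mul_le_mul_of_nonneg_right hΔ hden.le,
      mul_lt_mul_of_pos_right hδ (show (0:ℝ) < 1 + εbar by linarith),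
      mul_le_mul_of_nonneg_left hw hnn]
  · rw [le_div_iff₀ hden]
    nlinarith [mul_pos hγ0 hε0, mul_nonneg (sq_nonneg γ) hε0.le]
end

section
/- Let (Ω, ℙ) be a probability space, let n be a natural number, and let L₁, …, L_n : Ω → ℕ be random variables such that each Lᵢ is distributed according to the geometric distribution with parameter 1/2 on ℕ, i.e. ℙ(Lᵢ = k) = (1/2)^{k+1} for every k ∈ ℕ. Then for every natural number m, ℙ(∃ i ≤ n, Lᵢ ≥ m) ≤ n·(1/2)^m. In particular, taking m = ⌈c·log₂ n⌉ the probability that any Lᵢ reaches m is at most n^{1-c}, so a skip list on n keys has O(log n) levels with high probability. -/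
open MeasureTheory
open scoped ENNReal

/-- Union bound for the maximum level of a skip list.
Let `(Ω, ℙ)` be a probability space and `L₁,…,L_n : Ω → ℕ` random variables with
`ℙ(Lᵢ = k) = (1/2)^(k+1)` for every `k`. Then for every `m`,
`ℙ(∃ i, Lᵢ ≥ m) ≤ n·(1/2)^m`. -/
theorem stmt11 {Ω : Type*} [MeasurableSpace Ω] (ℙ : Measure Ω) [IsProbabilityMeasure ℙ]
    (n : ℕ) (L : Fin n → Ω → ℕ)
    (hgeom : ∀ i k, ℙ {ω | L i ω = k} = (1 / 2 : ℝ≥0∞) ^ (k + 1)) (m : ℕ) :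
    ℙ {ω | ∃ i, m ≤ L i ω} ≤ (n : ℝ≥0∞) * (1 / 2 : ℝ≥0∞) ^ m := by
  have hone : ∀ i : Fin n, ℙ {ω | m ≤ L i ω} ≤ (1 / 2 : ℝ≥0∞) ^ m := by
    intro i
    have hset : {ω | m ≤ L i ω} = ⋃ k : ℕ, {ω | L i ω = m + k} := by
      ext ω
      simp only [Set.mem_setOf_eq, Set.mem_iUnion]
      constructor
      · intro h; exact ⟨L i ω - m, (Nat.add_sub_cancel' h).symm⟩
      · rintro ⟨k, hk⟩; omega
    rw [hset]
    calc ℙ (⋃ k : ℕ, {ω | L i ω = m + k}) ≤ ∑' k : ℕ, ℙ {ω | L i ω = m + k} :=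
          measure_iUnion_le _
      _ = ∑' k : ℕ, (1 / 2 : ℝ≥0∞) ^ (m + k + 1) := by
          exact tsum_congr fun k => hgeom i (m + k)
      _ = (1 / 2 : ℝ≥0∞) ^ m := by
          have : ∀ k : ℕ, (1 / 2 : ℝ≥0∞) ^ (m + k + 1)
              = (1 / 2 : ℝ≥0∞) ^ (m + 1) * (1 / 2 : ℝ≥0∞) ^ k := by
            intro k; rw [← pow_add]; ring_nf
          rw [tsum_congr this, ENNReal.tsum_mul_left, ENNReal.tsum_geometric]
          have h2 : (1 - (1 / 2 : ℝ≥0∞))⁻¹ = 2 := by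
            rw [one_div, ENNReal.one_sub_inv_two]; simp
          rw [h2, pow_succ, mul_assoc, one_div,
            ENNReal.inv_mul_cancel two_ne_zero ENNReal.ofNat_ne_top, mul_one]
  have hset : {ω : Ω | ∃ i, m ≤ L i ω} = ⋃ i : Fin n, {ω | m ≤ L i ω} := by
    ext ω; simp
  rw [hset]
  calc ℙ (⋃ i : Fin n, {ω | m ≤ L i ω}) ≤ ∑' i : Fin n, ℙ {ω | m ≤ L i ω} :=
        measure_iUnion_le _
    _ ≤ ∑' _i : Fin n, (1 / 2 : ℝ≥0∞) ^ m := ENNReal.tsum_le_tsum hone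
    _ = (n : ℝ≥0∞) * (1 / 2 : ℝ≥0∞) ^ m := by
        simp [tsum_fintype, Finset.sum_const, nsmul_eq_mul]
end
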